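/- Let α ∈ (0,1]. Then ∑_{n=1}^{∞} e^{-αn}(αn)^{n-1}/n! = 1, i.e. the Borel(α) distribution is proper (places no mass at infinity) in the subcritical/critical case. -/

import Mathlib

/-!
Let `T(y) = ∑ n^{n-1} yⁿ / n!` be the tree function. The Borel(α) masses sum to `T(α e^{-α}) / α`,
so it suffices that `T(x e^{-x}) = x` on `[0, 1]`. For small `x`, expand `e^{-nx}` and regroup the
absolutely convergent double series by powers of `x`: the coefficient of `x^N` is
`(1 / N!) ∑_k (-1)^{N-k} C(N,k) k^{N-1}`, an `N`-th forward difference of a polynomial of degree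
`N - 1`, hence zero for `N ≥ 2`. By Stirling, `T` converges absolutely on the closed disc of
radius `e^{-1}`; since `x e^{-x} < e^{-1}` on `(0, 1)`, the identity extends there by analytic
continuation, and to `x = 1` by continuity.
-/

open Real Filter Finset Nat

/-- Equals `n ^ (n - 1) / n!` for `n ≠ 0`, and `0` for `n = 0` because `x / 0 = 0`. -/
noncomputable def treeCoeff (n : ℕ) : ℝ := (n : ℝ) ^ n / (n ! * n)

noncomputable def treeFun (y : ℝ) : ℝ := ∑' n, treeCoeff n * y ^ n

lemma treeCoeff_zero : treeCoeff 0 = 0 := by simp [treeCoeff]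

lemma treeCoeff_nonneg (n : ℕ) : 0 ≤ treeCoeff n := by unfold treeCoeff; positivity

lemma treeCoeff_of_ne_zero {n : ℕ} (hn : n ≠ 0) : treeCoeff n = (n : ℝ) ^ (n - 1) / n ! := by
  obtain ⟨m, rfl⟩ := Nat.exists_eq_add_one_of_ne_zero hn
  rw [treeCoeff, Nat.add_sub_cancel, pow_succ]
  field_simp

lemma treeCoeff_mul_exp_neg_one_pow_le (n : ℕ) :
    treeCoeff n * exp (-1) ^ n ≤ ((n : ℝ) ^ (3 / 2 : ℝ))⁻¹ := by
  rcases eq_or_ne n 0 with rfl | hn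
  · simp [treeCoeff]
  have hn' : (0 : ℝ) < n := by positivity
  have hsqrt : √(n : ℝ) ≤ √(2 * π * n) := Real.sqrt_le_sqrt (by nlinarith [pi_gt_three])
  calc treeCoeff n * exp (-1) ^ n = (n / exp 1) ^ n / (n ! * n) := by
        rw [treeCoeff, exp_neg, div_pow]; ring
    _ ≤ (n / exp 1) ^ n / (√(2 * π * n) * (n / exp 1) ^ n * n) := by
        gcongr; exact Stirling.le_factorial_stirling n
    _ ≤ (n / exp 1) ^ n / (√n * (n / exp 1) ^ n * n) := by gcongr
    _ = ((n : ℝ) ^ (3 / 2 : ℝ))⁻¹ := by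
        rw [show (3 / 2 : ℝ) = 1 / 2 + 1 by norm_num, rpow_add hn', rpow_one, ← sqrt_eq_rpow]
        field_simp

lemma summable_treeCoeff_mul_exp_neg_one_pow :
    Summable fun n => treeCoeff n * exp (-1) ^ n :=
  (summable_nat_rpow_inv.mpr (by norm_num)).of_nonneg_of_le
    (fun n => mul_nonneg (treeCoeff_nonneg n) (by positivity)) treeCoeff_mul_exp_neg_one_pow_le

lemma norm_treeCoeff_mul_pow_le {y : ℝ} (hy : ‖y‖ ≤ exp (-1)) (n : ℕ) :
    ‖treeCoeff n * y ^ n‖ ≤ treeCoeff n * exp (-1) ^ n := by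
  rw [norm_mul, norm_pow, Real.norm_of_nonneg (treeCoeff_nonneg n)]
  exact mul_le_mul_of_nonneg_left (pow_le_pow_left₀ (norm_nonneg y) hy n) (treeCoeff_nonneg n)

lemma summable_treeCoeff_mul_pow {y : ℝ} (hy : ‖y‖ ≤ exp (-1)) :
    Summable fun n => treeCoeff n * y ^ n :=
  summable_treeCoeff_mul_exp_neg_one_pow.of_norm_bounded (norm_treeCoeff_mul_pow_le hy)

lemma continuousOn_treeFun : ContinuousOn treeFun (Metric.closedBall 0 (exp (-1))) :=
  continuousOn_tsum (fun n => (continuous_const.mul (continuous_pow n)).continuousOn)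
    summable_treeCoeff_mul_exp_neg_one_pow
    fun n _ hy => norm_treeCoeff_mul_pow_le (mem_closedBall_zero_iff.mp hy) n

lemma analyticOnNhd_treeFun : AnalyticOnNhd ℝ treeFun (Metric.ball 0 (exp (-1))) := by
  set p := FormalMultilinearSeries.ofScalars ℝ treeCoeff
  have hp : treeFun = p.sum :=
    funext fun y => (FormalMultilinearSeries.ofScalars_sum_eq (E := ℝ) treeCoeff y).symm
  have hr : ENNReal.ofReal (exp (-1)) ≤ p.radius := by
    refine p.le_radius_of_summable_norm ?_
    simpa only [p, FormalMultilinearSeries.ofScalars_norm, Real.norm_of_nonneg (treeCoeff_nonneg _),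
      Real.coe_toNNReal _ (exp_pos _).le] using summable_treeCoeff_mul_exp_neg_one_pow
  rw [hp]
  exact p.analyticOnNhd.mono fun y hy =>
    Metric.mem_eball.mpr ((edist_lt_ofReal.mpr (Metric.mem_ball.mp hy)).trans_le hr)

lemma sum_range_neg_one_pow_mul_choose_mul_pow_eq_zero {R : Type*} [CommRing R] {j N : ℕ}
    (h : j < N) : ∑ k ∈ range (N + 1), (-1 : R) ^ (N - k) * N.choose k * (k : R) ^ j = 0 := by
  have := fwdDiff_iter_eq_sum_shift (h := (1 : R)) (fun r => r ^ j) N 0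
  rw [fwdDiff_iter_pow_eq_zero_of_lt h] at this
  simpa [zsmul_eq_mul] using this.symm

lemma treeCoeff_mul_neg_pow_div_factorial {n : ℕ} (hn : n ≠ 0) (m : ℕ) :
    treeCoeff n * (-(n : ℝ)) ^ m / m ! =
      (-1) ^ m * (n + m).choose n * (n : ℝ) ^ (n + m - 1) / (n + m)! := by
  have hfac : ((n + m).choose n * n ! * m ! : ℝ) = (n + m)! := by
    rw [add_comm n m, mul_right_comm]; exact_mod_cast Nat.add_choose_mul_factorial_mul_factorial m n
  have hpow : (n : ℝ) ^ (n + m - 1) = (n : ℝ) ^ (n - 1) * (n : ℝ) ^ m := by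
    rw [← pow_add]; congr 1; omega
  rw [treeCoeff_of_ne_zero hn, neg_pow, ← hfac, hpow]
  have : (n ! : ℝ) ≠ 0 := by positivity
  have : (m ! : ℝ) ≠ 0 := by positivity
  have : ((n + m).choose n : ℝ) ≠ 0 := by exact_mod_cast (Nat.choose_pos (by omega)).ne'
  field_simp

lemma sum_antidiagonal_treeCoeff_mul_neg_pow (N : ℕ) :
    ∑ p ∈ antidiagonal N, treeCoeff p.1 * (-(p.1 : ℝ)) ^ p.2 / p.2 ! = if N = 1 then 1 else 0 := by
  rw [Nat.sum_antidiagonal_eq_sum_range_succ_mk]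
  match N with
  | 0 => simp [treeCoeff]
  | 1 => simp [sum_range_succ, treeCoeff]
  | N + 2 =>
    have hterm : ∀ k ∈ range (N + 2 + 1), treeCoeff k * (-(k : ℝ)) ^ (N + 2 - k) / (N + 2 - k)! =
        (-1) ^ (N + 2 - k) * (N + 2).choose k * (k : ℝ) ^ (N + 1) / (N + 2)! := by
      intro k hk
      obtain ⟨m, hm⟩ := Nat.exists_eq_add_of_le (mem_range_succ_iff.mp hk)
      rcases eq_or_ne k 0 with rfl | hk0
      · simp [treeCoeff]
      · rw [hm, Nat.add_sub_cancel_left, treeCoeff_mul_neg_pow_div_factorial hk0,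
          show k + m - 1 = N + 1 by omega]
    rw [sum_congr rfl hterm, ← sum_div, sum_range_neg_one_pow_mul_choose_mul_pow_eq_zero (by omega),
      zero_div, if_neg (by omega)]

lemma hasSum_pow_div_factorial (x : ℝ) : HasSum (fun m => x ^ m / m !) (exp x) := by
  rw [exp_eq_exp_ℝ]; exact NormedSpace.expSeries_div_hasSum_exp x

lemma HasSum.sum_antidiagonal {α A : Type*} [AddCommMonoid α] [TopologicalSpace α] [ContinuousAdd α]
    [RegularSpace α] [AddMonoid A] [HasAntidiagonal A] {f : A × A → α} {a : α} (hf : HasSum f a) :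
    HasSum (fun N => ∑ p ∈ antidiagonal N, f p) a :=
  ((HasAntidiagonal.sigmaAntidiagonalEquivProd.hasSum_iff).mpr hf).sigma
    fun N => Finset.hasSum (antidiagonal N) f

noncomputable def treeExpansion (x : ℝ) (q : ℕ × ℕ) : ℝ :=
  treeCoeff q.1 * x ^ q.1 * ((-(q.1 * x)) ^ q.2 / q.2 !)

lemma hasSum_treeExpansion_fiber (x : ℝ) (n : ℕ) :
    HasSum (fun m => treeExpansion x (n, m)) (treeCoeff n * (x * exp (-x)) ^ n) := by
  rw [mul_pow, ← exp_nat_mul, mul_neg, ← mul_assoc]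
  exact (hasSum_pow_div_factorial _).mul_left _

lemma sum_antidiagonal_treeExpansion (x : ℝ) (N : ℕ) :
    ∑ p ∈ antidiagonal N, treeExpansion x p = if N = 1 then x else 0 := by
  have hterm : ∀ p ∈ antidiagonal N, treeExpansion x p =
      x ^ N * (treeCoeff p.1 * (-(p.1 : ℝ)) ^ p.2 / p.2 !) := by
    intro p hp
    rw [← mem_antidiagonal.mp hp, treeExpansion, pow_add, neg_mul_eq_neg_mul, mul_pow]
    ring
  rw [sum_congr rfl hterm, ← mul_sum, sum_antidiagonal_treeCoeff_mul_neg_pow]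
  split_ifs with h <;> simp [h]

lemma summable_treeExpansion {x : ℝ} (hx0 : 0 ≤ x) (hx : x * exp x ≤ exp (-1)) :
    Summable (treeExpansion x) := by
  set g : ℕ × ℕ → ℝ := fun q => treeCoeff q.1 * x ^ q.1 * ((q.1 * x) ^ q.2 / q.2 !)
  have hg : ∀ n, HasSum (fun m => g (n, m)) (treeCoeff n * (x * exp x) ^ n) := fun n => by
    rw [mul_pow, ← exp_nat_mul, ← mul_assoc]
    exact (hasSum_pow_div_factorial _).mul_left _
  have hg_nonneg : 0 ≤ g := fun q =>
    mul_nonneg (mul_nonneg (treeCoeff_nonneg _) (pow_nonneg hx0 _)) (by positivity)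
  have hg_summable : Summable g := by
    refine (summable_prod_of_nonneg hg_nonneg).mpr ⟨fun n => (hg n).summable, ?_⟩
    refine summable_treeCoeff_mul_exp_neg_one_pow.of_nonneg_of_le
      (fun n => tsum_nonneg fun m => hg_nonneg (n, m)) fun n => (hg n).tsum_eq ▸ ?_
    exact mul_le_mul_of_nonneg_left (pow_le_pow_left₀ (by positivity) hx n) (treeCoeff_nonneg n)
  refine hg_summable.of_norm_bounded fun q => le_of_eq ?_
  rw [treeExpansion, norm_mul, norm_mul, norm_div, norm_pow, norm_pow, norm_neg, norm_mul,
    Real.norm_of_nonneg (treeCoeff_nonneg _), Real.norm_of_nonneg hx0, Real.norm_natCast,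
    Real.norm_natCast]

lemma treeFun_mul_exp_neg_of_mul_exp_le {x : ℝ} (hx0 : 0 ≤ x) (hx : x * exp x ≤ exp (-1)) :
    treeFun (x * exp (-x)) = x := by
  have hsum := (summable_treeExpansion hx0 hx).hasSum
  refine (hsum.prod_fiberwise (hasSum_treeExpansion_fiber x)).tsum_eq.trans ?_
  refine HasSum.unique ?_ (hasSum_ite_eq 1 x)
  simpa only [sum_antidiagonal_treeExpansion] using hsum.sum_antidiagonal

lemma mul_exp_neg_lt_exp_neg_one {x : ℝ} (hx : x ≠ 1) : x * exp (-x) < exp (-1) :=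
  calc x * exp (-x) < exp (x - 1) * exp (-x) := by
        gcongr; linarith [add_one_lt_exp (sub_ne_zero.mpr hx)]
    _ = exp (-1) := by rw [← exp_add]; ring_nf

lemma mul_exp_le_exp_neg_one {x : ℝ} (hx0 : 0 ≤ x) (hx : x ≤ 1 / 8) : x * exp x ≤ exp (-1) := by
  have h1 : exp x ≤ exp 1 := exp_le_exp.mpr (by linarith)
  have h2 : exp (-1) * exp 1 = 1 := by rw [← exp_add]; simp
  nlinarith [exp_one_lt_d9, exp_pos 1, exp_pos (-1), exp_pos x]

lemma treeFun_mul_exp_neg {x : ℝ} (hx0 : 0 ≤ x) (hx1 : x ≤ 1) : treeFun (x * exp (-x)) = x := by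
  set f := fun t : ℝ => treeFun (t * exp (-t))
  have hf_analytic : AnalyticOnNhd ℝ f (Set.Ioo 0 1) := fun t ht => by
    refine analyticOnNhd_treeFun _ ?_ |>.comp (by fun_prop)
    rw [mem_ball_zero_iff, Real.norm_of_nonneg (by have := ht.1; positivity)]
    exact mul_exp_neg_lt_exp_neg_one ht.2.ne
  have hf_small : f =ᶠ[nhds (1 / 16)] id := by
    have h16 : (1 / 16 : ℝ) ∈ Set.Ioo 0 (1 / 8) := by norm_num
    filter_upwards [Ioo_mem_nhds h16.1 h16.2] with t ht
    exact treeFun_mul_exp_neg_of_mul_exp_le ht.1.le (mul_exp_le_exp_neg_one ht.1.le ht.2.le)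
  have hf_Ioo : Set.EqOn f id (Set.Ioo 0 1) :=
    hf_analytic.eqOn_of_preconnected_of_eventuallyEq analyticOnNhd_id isPreconnected_Ioo
      (by norm_num) hf_small
  have hf_cont : ContinuousOn f (Set.Icc 0 1) :=
    continuousOn_treeFun.comp (by fun_prop) fun t ht => by
      rw [mem_closedBall_zero_iff, Real.norm_of_nonneg (by have := ht.1; positivity)]
      exact mul_exp_neg_le_exp_neg_one t
  exact hf_Ioo.of_subset_closure hf_cont continuousOn_id Set.Ioo_subset_Icc_self
    (by rw [closure_Ioo zero_ne_one]) ⟨hx0, hx1⟩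

lemma treeCoeff_succ_mul_pow (x : ℝ) (n : ℕ) :
    treeCoeff (n + 1) * (x * exp (-x)) ^ (n + 1) =
      x * (exp (-(x * (n + 1))) * (x * (n + 1)) ^ n / (n + 1)!) := by
  rw [treeCoeff_of_ne_zero n.add_one_ne_zero, Nat.add_sub_cancel, Nat.cast_add_one, mul_pow,
    mul_pow, ← exp_nat_mul, show ((n + 1 : ℕ) : ℝ) * -x = -(x * (n + 1)) by push_cast; ring]
  ring

/-- For `α ∈ (0,1]` the Borel(α) distribution is proper:
`∑_{n≥1} e^{-αn}(αn)^{n-1}/n! = 1`. -/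
theorem borel_total_mass_subcritical
    (α : ℝ) (hα0 : 0 < α) (hα1 : α ≤ 1) :
    ∑' n : ℕ, Real.exp (-(α * (n + 1))) * (α * (n + 1)) ^ n / (Nat.factorial (n + 1) : ℝ) = 1 := by
  have hy : ‖α * exp (-α)‖ ≤ exp (-1) := by
    rw [Real.norm_of_nonneg (by positivity)]
    exact mul_exp_neg_le_exp_neg_one α
  have hT := (summable_treeCoeff_mul_pow hy).tsum_eq_zero_add
  rw [← treeFun, treeFun_mul_exp_neg hα0.le hα1, treeCoeff_zero, zero_mul, zero_add] at hT
  simp_rw [treeCoeff_succ_mul_pow, tsum_mul_left] at hT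
  exact mul_left_cancel₀ hα0.ne' (hT.symm.trans (mul_one α).symm)
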